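/- Let m ≥ 2, γ a primitive m-th root of unity in k, φ_t(x) = 1 - γ^{-t-1} x^d, and let 1 ≤ i ≤ m-1. Then ∑_{j=0}^{m-1} γ^{-ij} · φ_j φ_{j+1} ⋯ φ_{j+m-2-i} = 0 (indices mod m, the product having m-1-i factors). -/

import Mathlib

/-!
Write `ζ = γ⁻¹` and `n = m - 1 - i`. The `j`-th product is `Q (ζ ^ j • X ^ d)` for the single
polynomial `Q = ∏_{r < n} (1 - ζ ^ (r + 1) Y)` of degree at most `n`. Hence the coefficient of
`X ^ (d c)` in the sum is `Q.coeff c` times `∑_{j < m} (ζ ^ (i + c)) ^ j`, a full geometric sum over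
a nontrivial `m`-th root of unity, because `1 ≤ i + c ≤ m - 1`.
-/

open Polynomial Finset

namespace IsPrimitiveRoot

variable {R : Type*} [CommRing R] [IsDomain R] {ζ : R} {m : ℕ}

theorem geom_sum_pow_eq_zero (hζ : IsPrimitiveRoot ζ m) {a : ℕ} (ha0 : a ≠ 0) (ham : a < m) :
    ∑ j ∈ range m, (ζ ^ a) ^ j = 0 := by
  refine eq_zero_of_ne_zero_of_mul_left_eq_zero
    (sub_ne_zero_of_ne (hζ.pow_ne_one_of_pos_of_lt ha0 ham).symm) ?_
  rw [mul_neg_geom_sum, ← pow_mul, mul_comm, pow_mul, hζ.pow_eq_one, one_pow, sub_self]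

theorem sum_C_pow_mul_comp_C_pow_mul_eq_zero (hζ : IsPrimitiveRoot ζ m) {i : ℕ} (hi : i ≠ 0)
    (Q p : R[X]) (hQ : i + Q.natDegree < m) :
    ∑ j ∈ range m, C (ζ ^ (i * j)) * Q.comp (C (ζ ^ j) * p) = 0 := by
  have hQ' : Q.natDegree < m - i := by omega
  have h_expand : ∀ j, C (ζ ^ (i * j)) * Q.comp (C (ζ ^ j) * p) =
      ∑ c ∈ range (m - i), C ((ζ ^ (i + c)) ^ j) * (C (Q.coeff c) * p ^ c) := by
    intro j
    conv_lhs => rw [Q.as_sum_range' _ hQ']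
    simp only [← C_mul_X_pow_eq_monomial, Polynomial.sum_comp, mul_sum, mul_comp, C_comp,
      X_pow_comp]
    refine sum_congr rfl fun c _ => ?_
    rw [mul_pow, ← C_pow, ← pow_mul, pow_add, mul_pow, ← pow_mul, ← pow_mul, mul_comm j c, C_mul]
    ring
  rw [sum_congr rfl fun j _ => h_expand j, sum_comm]
  refine sum_eq_zero fun c hc => ?_
  rw [← sum_mul, ← map_sum, hζ.geom_sum_pow_eq_zero (by omega) (by simp at hc; omega),
    map_zero, zero_mul]

end IsPrimitiveRoot

theorem natDegree_prod_one_sub_C_mul_X_le {R : Type*} [CommRing R] {ι : Type*} (s : Finset ι)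
    (a : ι → R) : (∏ r ∈ s, (1 - C (a r) * X)).natDegree ≤ s.card := by
  calc _ ≤ ∑ r ∈ s, (1 - C (a r) * X).natDegree := natDegree_prod_le _ _
    _ ≤ s.card • 1 := sum_le_card_nsmul _ _ _ fun r _ => by compute_degree
    _ = s.card := by rw [smul_eq_mul, mul_one]

theorem stmt_6_general {k : Type*} [Field k]
    (m d : ℕ) (γ : k) (hγ : IsPrimitiveRoot γ m)
    (i : ℕ) (hi1 : 1 ≤ i) (hi2 : i ≤ m - 1) :
    ∑ j ∈ Finset.range m, Polynomial.C (γ ^ (-((i : ℤ) * (j : ℤ)))) *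
      ∏ r ∈ Finset.range (m - 1 - i),
        ((1 : Polynomial k) - Polynomial.C (γ ^ (-((j : ℤ) + (r : ℤ)) - 1)) * Polynomial.X ^ d)
      = 0 := by
  set Q : k[X] := ∏ r ∈ range (m - 1 - i), (1 - C (γ⁻¹ ^ (r + 1)) * X)
  have hQ : i + Q.natDegree < m := by
    have : Q.natDegree ≤ m - 1 - i :=
      (natDegree_prod_one_sub_C_mul_X_le _ _).trans_eq (card_range _)
    omega
  have h_inv_pow : ∀ a : ℕ, γ⁻¹ ^ a = γ ^ (-(a : ℤ)) := fun a => by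
    rw [inv_pow, ← zpow_natCast, zpow_neg]
  have h_term : ∀ j : ℕ, C (γ ^ (-((i : ℤ) * j))) *
      ∏ r ∈ range (m - 1 - i), (1 - C (γ ^ (-((j : ℤ) + r) - 1)) * X ^ d) =
      C (γ⁻¹ ^ (i * j)) * Q.comp (C (γ⁻¹ ^ j) * X ^ d) := by
    intro j
    simp only [Q, Polynomial.prod_comp, sub_comp, one_comp, mul_comp, C_comp, X_comp, ← mul_assoc,
      ← C_mul, ← pow_add]
    simp only [h_inv_pow]
    rw [Nat.cast_mul]
    refine congrArg _ (prod_congr rfl fun r _ => ?_)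
    rw [show -((j : ℤ) + r) - 1 = -((r + 1 + j : ℕ) : ℤ) by push_cast; ring]
  rw [sum_congr rfl fun j _ => h_term j]
  exact hγ.inv.sum_C_pow_mul_comp_C_pow_mul_eq_zero (by omega) Q _ hQ

/-- for 1 ≤ i ≤ m-1, ∑_{j=0}^{m-1} γ^{-ij} φ_j φ_{j+1} ⋯ φ_{j+m-2-i} = 0. -/
theorem stmt_6 {k : Type*} [Field k] [IsAlgClosed k] [CharZero k]
    (m d : ℕ) (hm : 2 ≤ m) (hd : 1 ≤ d) (γ : k) (hγ : IsPrimitiveRoot γ m)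
    (i : ℕ) (hi1 : 1 ≤ i) (hi2 : i ≤ m - 1) :
    ∑ j ∈ Finset.range m, Polynomial.C (γ ^ (-((i : ℤ) * (j : ℤ)))) *
      ∏ r ∈ Finset.range (m - 1 - i),
        ((1 : Polynomial k) - Polynomial.C (γ ^ (-((j : ℤ) + (r : ℤ)) - 1)) * Polynomial.X ^ d)
      = 0 :=
  stmt_6_general m d γ hγ i hi1 hi2
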